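/- arXiv:2109.05640 — 3 statements merged into one kernel-verified Lean document; each statement's English description precedes it below -/
import Mathlib

section
/- If K is the uniform kernel K(u) = (1/2)𝟙{|u|≤1} and K_h(u) = (1/h)K(u/h) for h > 0, then the convolution ℓ_h = ρ_τ * K_h satisfies ℓ_h(u) = (h/2)·U(u/h) + (τ − 1/2)u, where U(u) = (u²/2 + 1/2)𝟙{|u|≤1} + |u|𝟙{|u|>1}. -/
/-!
Write `ρ_τ(v) = (τ - 1/2) v + |v| / 2`. Smoothing with the uniform kernel of bandwidth `h` is
averaging over `[u - h, u + h]`; this reproduces the linear part exactly, and since `v |v| / 2` is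
a primitive of `|v|`, the absolute value becomes `((u + h)|u + h| - (u - h)|u - h|) / (4h)`,
which equals `h U(u / h)` by a case split on `|u| ≤ h`.
-/

open MeasureTheory

/-- The quantile check function ρ_τ. -/
noncomputable def checkFn (τ u : ℝ) : ℝ := u * (τ - if u < 0 then 1 else 0)

/-- The uniform kernel K(u) = (1/2)·𝟙{|u| ≤ 1}. -/
noncomputable def unifK (u : ℝ) : ℝ := if |u| ≤ 1 then 1/2 else 0

/-- The Huber-type function U. -/
noncomputable def Ufn (u : ℝ) : ℝ := if |u| ≤ 1 then u^2/2 + 1/2 else |u|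

lemma checkFn_eq (τ v : ℝ) : checkFn τ v = (τ - 1/2) * v + |v| / 2 := by
  unfold checkFn
  split_ifs with hv
  · rw [abs_of_neg hv]; ring
  · rw [abs_of_nonneg (not_lt.mp hv)]; ring

lemma integral_zero_abs (x : ℝ) : ∫ v in (0)..x, |v| = x * |x| / 2 := by
  rcases le_total 0 x with hx | hx
  · rw [intervalIntegral.integral_congr (g := fun v ↦ v) fun v hv ↦
      abs_of_nonneg (Set.uIcc_of_le hx ▸ hv).1, integral_id, abs_of_nonneg hx]
    ring
  · rw [intervalIntegral.integral_congr (g := fun v ↦ -v) fun v hv ↦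
      abs_of_nonpos (Set.uIcc_of_ge hx ▸ hv).2, intervalIntegral.integral_neg, integral_id,
      abs_of_nonpos hx]
    ring

lemma integral_abs (a b : ℝ) : ∫ v in a..b, |v| = (b * |b| - a * |a|) / 2 := by
  have hint : ∀ x : ℝ, IntervalIntegrable (fun v : ℝ ↦ |v|) volume 0 x :=
    fun x ↦ continuous_abs.intervalIntegrable 0 x
  rw [← intervalIntegral.integral_interval_sub_left (hint b) (hint a), integral_zero_abs,
    integral_zero_abs]
  ring

lemma integral_checkFn (τ a b : ℝ) :
    ∫ v in a..b, checkFn τ v = (τ - 1/2) * ((b ^ 2 - a ^ 2) / 2) + (b * |b| - a * |a|) / 4 := by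
  simp only [checkFn_eq]
  rw [intervalIntegral.integral_add (f := fun v ↦ (τ - 1/2) * v) (g := fun v ↦ |v| / 2)
      ((continuous_const.mul continuous_id).intervalIntegrable _ _)
      ((continuous_abs.div_const _).intervalIntegrable _ _),
    intervalIntegral.integral_const_mul, intervalIntegral.integral_div, integral_id, integral_abs]
  ring

lemma rescaled_unifK_eq_indicator {h : ℝ} (hh : 0 < h) (u v : ℝ) :
    (1 / h) * unifK ((v - u) / h) = (Set.Icc (u - h) (u + h)).indicator (fun _ ↦ (2 * h)⁻¹) v := by
  have hmem : |(v - u) / h| ≤ 1 ↔ v ∈ Set.Icc (u - h) (u + h) := by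
    rw [abs_div, abs_of_pos hh, div_le_one hh, abs_sub_le_iff, Set.mem_Icc]
    constructor <;> rintro ⟨h₁, h₂⟩ <;> constructor <;> linarith
  unfold unifK
  by_cases hv : v ∈ Set.Icc (u - h) (u + h)
  · rw [if_pos (hmem.mpr hv), Set.indicator_of_mem hv]
    field_simp
  · rw [if_neg (mt hmem.mp hv), Set.indicator_of_notMem hv, mul_zero]

lemma integral_mul_rescaled_unifK (f : ℝ → ℝ) {h : ℝ} (hh : 0 < h) (u : ℝ) :
    ∫ v, f v * ((1 / h) * unifK ((v - u) / h)) = (∫ v in (u - h)..(u + h), f v) / (2 * h) := by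
  simp_rw [rescaled_unifK_eq_indicator hh, ← Set.indicator_mul_right]
  rw [integral_indicator measurableSet_Icc, integral_Icc_eq_integral_Ioc,
    ← intervalIntegral.integral_of_le (by linarith), intervalIntegral.integral_mul_const,
    div_eq_mul_inv]

lemma mul_Ufn_div {h : ℝ} (hh : 0 < h) (u : ℝ) :
    h * Ufn (u / h) = ((u + h) * |u + h| - (u - h) * |u - h|) / (4 * h) := by
  unfold Ufn
  simp only [abs_div, abs_of_pos hh, div_le_one hh]
  split_ifs with hu
  · obtain ⟨hu₁, hu₂⟩ := abs_le.mp hu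
    rw [abs_of_nonneg (by linarith : 0 ≤ u + h), abs_of_nonpos (by linarith : u - h ≤ 0)]
    field_simp
    ring
  · rcases lt_abs.mp (not_le.mp hu) with hu' | hu'
    · rw [abs_of_pos (by linarith : 0 < u + h), abs_of_pos (by linarith : 0 < u - h),
        abs_of_pos (by linarith : 0 < u)]
      field_simp
      ring
    · rw [abs_of_neg (by linarith : u + h < 0), abs_of_neg (by linarith : u - h < 0),
        abs_of_neg (by linarith : u < 0)]
      field_simp
      ring

theorem smoothed_loss_uniform_general (τ h : ℝ) (hh : 0 < h) (u : ℝ) :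
    (∫ v : ℝ, checkFn τ v * ((1/h) * unifK ((v - u)/h))) =
      (h/2) * Ufn (u/h) + (τ - 1/2) * u := by
  rw [integral_mul_rescaled_unifK _ hh, integral_checkFn, div_mul_eq_mul_div, mul_Ufn_div hh]
  field_simp
  ring

theorem smoothed_loss_uniform (τ h : ℝ) (hτ : τ ∈ Set.Ioo (0:ℝ) 1) (hh : 0 < h) (u : ℝ) :
    (∫ v : ℝ, checkFn τ v * ((1/h) * unifK ((v - u)/h))) =
      (h/2) * Ufn (u/h) + (τ - 1/2) * u :=
  smoothed_loss_uniform_general τ h hh u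
end

section
/- If K is the logistic kernel K(u) = e^{−u}/(1+e^{−u})² and K_h(u) = (1/h)K(u/h) for h > 0, then the convolution ℓ_h = ρ_τ * K_h satisfies ℓ_h(u) = τu + h·log(1 + e^{−u/h}) for all real u. -/
open MeasureTheory

/-- The logistic kernel K(u) = e^{−u}/(1+e^{−u})². -/
noncomputable def logisticK (u : ℝ) : ℝ := Real.exp (-u) / (1 + Real.exp (-u))^2

open Set Filter Real Topology

lemma logisticK_nonneg (x : ℝ) : 0 ≤ logisticK x := by
  unfold logisticK; positivity

lemma sigmoid_hasDerivAt (x : ℝ) :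
    HasDerivAt (fun x => (1 + Real.exp (-x))⁻¹) (logisticK x) x := by
  have h1 : HasDerivAt (fun x : ℝ => 1 + Real.exp (-x)) (-Real.exp (-x)) x := by
    simpa using ((Real.hasDerivAt_exp (-x)).comp x (hasDerivAt_neg x)).const_add 1
  have h2 := h1.inv (by positivity)
  refine h2.congr_deriv ?_
  unfold logisticK
  field_simp

lemma log_one_add_exp_hasDerivAt (x : ℝ) :
    HasDerivAt (fun x => Real.log (1 + Real.exp x)) ((1 + Real.exp (-x))⁻¹) x := by
  have h1 : HasDerivAt (fun x : ℝ => 1 + Real.exp x) (Real.exp x) x :=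
    (Real.hasDerivAt_exp x).const_add 1
  have h2 := h1.log (by positivity)
  convert h2 using 1
  rw [Real.exp_neg]
  have := Real.exp_pos x
  rw [add_comm]
  field_simp

/-- antiderivative of `v ↦ v * K_h(v-u)` -/
noncomputable def Fant (h u v : ℝ) : ℝ :=
  v * (1 + Real.exp (-((v - u)/h)))⁻¹ - h * Real.log (1 + Real.exp ((v - u)/h))

noncomputable def fder (h u v : ℝ) : ℝ := v * ((1/h) * logisticK ((v - u)/h))

lemma fder_hasDerivAt {h : ℝ} (hh : 0 < h) (u v : ℝ) :
    HasDerivAt (Fant h u) (fder h u v) v := by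
  have hi : HasDerivAt (fun v : ℝ => (v - u)/h) (1/h) v := by
    simpa using ((hasDerivAt_id v).sub_const u).div_const h
  have t1 : HasDerivAt (fun v : ℝ => (1 + Real.exp (-((v - u)/h)))⁻¹)
      (logisticK ((v - u)/h) * (1/h)) v := by
    have := (sigmoid_hasDerivAt ((v - u)/h)).comp v hi; exact this
  have t2 : HasDerivAt (fun v : ℝ => h * Real.log (1 + Real.exp ((v - u)/h)))
      (((1 + Real.exp (-((v - u)/h)))⁻¹ * (1/h)) * h) v := by
    have := (((log_one_add_exp_hasDerivAt ((v - u)/h)).comp v hi)).const_mul h; exact this |>.congr_deriv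
      (by ring)
  have := (((hasDerivAt_id v).mul t1).sub t2)
  refine this.congr_deriv ?_
  unfold fder
  simp only [id_eq]
  field_simp
  ring

lemma tendsto_aux_exp {h : ℝ} (hh : 0 < h) (c : ℝ) :
    Tendsto (fun w : ℝ => w * Real.exp (-(w/h) + c)) atTop (𝓝 0) := by
  have E : Tendsto (fun y : ℝ => y * Real.exp (-y)) atTop (𝓝 0) := by
    simpa using Real.tendsto_pow_mul_exp_neg_atTop_nhds_zero 1
  have hdiv : Tendsto (fun w : ℝ => w / h) atTop atTop := tendsto_id.atTop_div_const hh
  have C := (E.comp hdiv).const_mul (h * Real.exp c)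
  simp only [mul_zero] at C
  refine C.congr fun w => ?_
  simp only [Function.comp_apply]
  rw [Real.exp_add]
  field_simp

/-- `F` tends to `0` at `-∞`. -/
lemma Fant_tendsto_atBot {h : ℝ} (hh : 0 < h) (u : ℝ) :
    Tendsto (Fant h u) atBot (𝓝 0) := by
  have hx : Tendsto (fun v : ℝ => (v - u)/h) atBot atBot := by
    apply Tendsto.atBot_div_const hh
    simpa [sub_eq_add_neg] using tendsto_atBot_add_const_right atBot (-u) tendsto_id
  have hexp : Tendsto (fun v : ℝ => Real.exp ((v - u)/h)) atBot (𝓝 0) :=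
    Real.tendsto_exp_atBot.comp hx
  have part2 : Tendsto (fun v : ℝ => h * Real.log (1 + Real.exp ((v - u)/h))) atBot (𝓝 0) := by
    have h1 : Tendsto (fun v : ℝ => 1 + Real.exp ((v - u)/h)) atBot (𝓝 1) := by
      simpa using tendsto_const_nhds.add hexp
    have h2 := ((Real.continuousAt_log one_ne_zero).tendsto.comp h1)
    simp only [Real.log_one] at h2
    simpa using h2.const_mul h
  have part1 : Tendsto (fun v : ℝ => v * (1 + Real.exp (-((v - u)/h)))⁻¹) atBot (𝓝 0) := by
    have hb : Tendsto (fun v : ℝ => -v * Real.exp ((v - u)/h)) atBot (𝓝 0) := by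
      have := (tendsto_aux_exp hh (-u/h)).comp tendsto_neg_atBot_atTop
      refine this.congr fun v => ?_
      simp only [Function.comp_apply]
      congr 1
      field_simp
      ring
    apply squeeze_zero_norm' _ hb
    filter_upwards [Iic_mem_atBot (0:ℝ)] with v hv
    have hS0 : (0:ℝ) ≤ (1 + Real.exp (-((v - u)/h)))⁻¹ := by positivity
    have hS1 : (1 + Real.exp (-((v - u)/h)))⁻¹ ≤ Real.exp ((v - u)/h) := by
      rw [inv_le_iff_one_le_mul₀ (by positivity)]
      have he : Real.exp ((v - u)/h) * (1 + Real.exp (-((v - u)/h)))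
          = Real.exp ((v - u)/h) + 1 := by
        rw [mul_add, mul_one, ← Real.exp_add]; simp
      rw [he]; linarith [Real.exp_pos ((v - u)/h)]
    rw [Real.norm_eq_abs, abs_mul, abs_of_nonneg hS0, abs_of_nonpos (mem_Iic.mp hv)]
    exact mul_le_mul_of_nonneg_left hS1 (neg_nonneg.mpr (mem_Iic.mp hv))
  have := part1.sub part2
  rw [sub_zero] at this; exact this

lemma log_one_add_exp_id (x : ℝ) :
    Real.log (1 + Real.exp x) = x + Real.log (1 + Real.exp (-x)) := by
  have h1 : (1:ℝ) + Real.exp x = Real.exp x * (1 + Real.exp (-x)) := by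
    rw [mul_add, mul_one, ← Real.exp_add]
    simp [add_comm]
  rw [h1, Real.log_mul (Real.exp_ne_zero x) (by positivity), Real.log_exp]

/-- `F` tends to `u` at `+∞`. -/
lemma Fant_tendsto_atTop {h : ℝ} (hh : 0 < h) (u : ℝ) :
    Tendsto (Fant h u) atTop (𝓝 u) := by
  have hx : Tendsto (fun v : ℝ => -((v - u)/h)) atTop atBot := by
    apply tendsto_neg_atBot_iff.mpr
    apply Tendsto.atTop_div_const hh
    simpa [sub_eq_add_neg] using tendsto_atTop_add_const_right atTop (-u) tendsto_id
  have hexp : Tendsto (fun v : ℝ => Real.exp (-((v - u)/h))) atTop (𝓝 0) :=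
    Real.tendsto_exp_atBot.comp hx
  have partlog : Tendsto (fun v : ℝ => h * Real.log (1 + Real.exp (-((v - u)/h))))
      atTop (𝓝 0) := by
    have h1 : Tendsto (fun v : ℝ => 1 + Real.exp (-((v - u)/h))) atTop (𝓝 1) := by
      simpa using tendsto_const_nhds.add hexp
    have h2 := ((Real.continuousAt_log one_ne_zero).tendsto.comp h1)
    simp only [Real.log_one] at h2
    simpa using h2.const_mul h
  have partA : Tendsto (fun v : ℝ => v * (1 - (1 + Real.exp (-((v - u)/h)))⁻¹))
      atTop (𝓝 0) := by
    have hb : Tendsto (fun v : ℝ => v * Real.exp (-((v - u)/h))) atTop (𝓝 0) := by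
      have := tendsto_aux_exp hh (u/h)
      refine this.congr fun v => ?_
      congr 1
      field_simp
      ring
    apply squeeze_zero_norm' _ hb
    filter_upwards [Ici_mem_atTop (0:ℝ)] with v hv
    have hpos : (0:ℝ) < 1 + Real.exp (-((v - u)/h)) := by positivity
    have hS0 : (0:ℝ) ≤ 1 - (1 + Real.exp (-((v - u)/h)))⁻¹ := by
      have : (1 + Real.exp (-((v - u)/h)))⁻¹ ≤ 1 := by
        rw [inv_le_one_iff₀]; right; linarith [Real.exp_pos (-((v - u)/h))]
      linarith
    have hS1 : 1 - (1 + Real.exp (-((v - u)/h)))⁻¹ ≤ Real.exp (-((v - u)/h)) := by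
      have he : 1 - (1 + Real.exp (-((v - u)/h)))⁻¹
          = Real.exp (-((v - u)/h)) / (1 + Real.exp (-((v - u)/h))) := by
        field_simp
        ring
      rw [he]
      exact div_le_self (Real.exp_pos _).le (by linarith [Real.exp_pos (-((v - u)/h))])
    rw [Real.norm_eq_abs, abs_mul, abs_of_nonneg hS0, abs_of_nonneg (mem_Ici.mp hv)]
    exact mul_le_mul_of_nonneg_left hS1 (mem_Ici.mp hv)
  have key := ((partA.const_mul (-1)).const_add u).sub partlog
  norm_num at key
  refine key.congr fun v => ?_
  unfold Fant
  rw [log_one_add_exp_id]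
  field_simp
  ring

theorem smoothed_loss_logistic (τ h : ℝ) (hτ : τ ∈ Set.Ioo (0:ℝ) 1) (hh : 0 < h) (u : ℝ) :
    (∫ v : ℝ, checkFn τ v * ((1/h) * logisticK ((v - u)/h))) =
      τ * u + h * Real.log (1 + Real.exp (-u/h)) := by
  obtain ⟨hτ0, hτ1⟩ := hτ
  set φ : ℝ → ℝ := fun v => checkFn τ v * ((1/h) * logisticK ((v - u)/h)) with hφ
  -- right half-line
  have hderivR : ∀ x ∈ Ici (0:ℝ), HasDerivAt (fun v => τ * Fant h u v) (τ * fder h u x) x :=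
    fun x _ => (fder_hasDerivAt hh u x).const_mul τ
  have hposR : ∀ x ∈ Ioi (0:ℝ), 0 ≤ τ * fder h u x := by
    intro x hx
    have hK := logisticK_nonneg ((x - u)/h)
    have hx0 : (0:ℝ) ≤ x := le_of_lt hx
    unfold fder
    have : (0:ℝ) ≤ 1/h := by positivity
    apply mul_nonneg hτ0.le
    apply mul_nonneg hx0 (mul_nonneg this hK)
  have htendR := (Fant_tendsto_atTop hh u).const_mul τ
  have hIR := integral_Ioi_of_hasDerivAt_of_nonneg' hderivR hposR htendR
  have hintR := integrableOn_Ioi_deriv_of_nonneg' hderivR hposR htendR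
  -- left half-line via reflection
  have hderivL : ∀ x ∈ Ici (0:ℝ), HasDerivAt (fun w => (1 - τ) * Fant h u (-w))
      ((τ - 1) * fder h u (-x)) x := by
    intro x _
    have := ((fder_hasDerivAt hh u (-x)).comp x (hasDerivAt_neg x)).const_mul (1 - τ)
    refine this.congr_deriv ?_
    ring
  have hposL : ∀ x ∈ Ioi (0:ℝ), 0 ≤ (τ - 1) * fder h u (-x) := by
    intro x hx
    have hK := logisticK_nonneg ((-x - u)/h)
    have hx0 : (0:ℝ) ≤ x := le_of_lt hx
    have h1 : fder h u (-x) ≤ 0 := by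
      unfold fder
      apply mul_nonpos_of_nonpos_of_nonneg (by linarith)
      positivity
    nlinarith [h1]
  have htendL : Tendsto (fun w => (1 - τ) * Fant h u (-w)) atTop (𝓝 ((1 - τ) * 0)) :=
    ((Fant_tendsto_atBot hh u).comp tendsto_neg_atTop_atBot).const_mul (1 - τ)
  have hIL := integral_Ioi_of_hasDerivAt_of_nonneg' hderivL hposL htendL
  rw [neg_zero] at hIL
  have hintL := integrableOn_Ioi_deriv_of_nonneg' hderivL hposL htendL
  -- identify the integrand on each half line
  have hφR : EqOn (fun x => τ * fder h u x) φ (Ioi 0) := by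
    intro v hv
    simp only [hφ, checkFn, fder, if_neg (not_lt.mpr (le_of_lt (mem_Ioi.mp hv)))]
    ring
  have hφL : EqOn (fun x => (τ - 1) * fder h u (-x)) (fun x => φ (-x)) (Ioi 0) := by
    intro v hv
    have : (-v : ℝ) < 0 := neg_neg_iff_pos.mpr (mem_Ioi.mp hv)
    simp only [hφ, checkFn, fder, if_pos this]
    ring
  have hIntφR : IntegrableOn φ (Ioi 0) := hintR.congr_fun hφR measurableSet_Ioi
  have hIntφnegL : IntegrableOn (fun x => φ (-x)) (Ioi 0) :=
    hintL.congr_fun hφL measurableSet_Ioi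
  have hIntφnegL' : IntegrableOn (fun x => φ (-x)) (Ici 0) :=
    Iff.mpr integrableOn_Ici_iff_integrableOn_Ioi hIntφnegL
  have hIntφL : IntegrableOn φ (Iic 0) := by
    have h_map_neg : ((volume : Measure ℝ).restrict (Ici 0)).map Neg.neg
        = (volume : Measure ℝ).restrict (Iic 0) := by
      conv => rhs; rw [← Measure.map_neg_eq_self (volume : Measure ℝ),
        measurableEmbedding_neg.restrict_map]
      simp
    rw [IntegrableOn, ← h_map_neg, measurableEmbedding_neg.integrable_map_iff]
    exact hIntφnegL'
  -- split the integral
  have hsplit := intervalIntegral.integral_Iic_add_Ioi (μ := volume) hIntφL hIntφR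
  -- value on the right
  have hvalR : ∫ v in Ioi (0:ℝ), φ v = τ * u - τ * Fant h u 0 := by
    rw [← setIntegral_congr_fun measurableSet_Ioi hφR]
    exact hIR
  -- value on the left
  have hvalL : ∫ v in Iic (0:ℝ), φ v = (1 - τ) * 0 - (1 - τ) * Fant h u 0 := by
    have e1 : (∫ x in Ioi (0:ℝ), φ (-x)) = ∫ x in Iic (-(0:ℝ)), φ x :=
      integral_comp_neg_Ioi 0 φ
    rw [neg_zero] at e1
    rw [← e1, ← setIntegral_congr_fun measurableSet_Ioi hφL]
    exact hIL
  have hF0 : Fant h u 0 = -(h * Real.log (1 + Real.exp (-u/h))) := by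
    unfold Fant
    rw [zero_sub, neg_div]
    ring
  rw [← hsplit, hvalR, hvalL, hF0]
  ring
end

section
/- Let ε be a real random variable with CDF F, density f Lipschitz with constant l₀ and satisfying F(0) = τ. Let K be a symmetric probability density with second absolute moment κ₂ = ∫v²K(v)dv < ∞ and CDF K̄. Then for any h > 0, |E[K̄(−ε/h)] − τ| ≤ (l₀/2)·κ₂·h². -/
/-!
Writing `F` for the CDF of `ε`, Fubini gives `E[K̄(-ε/h)] = ∫ K(t) F(-ht) dt`, and the symmetry
of `K` turns this into `∫ K(t) (F(ht) + F(-ht))/2 dt`. Since `∫ K = 1` and `F(0) = τ`, the bias is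
`∫ K(t) ((F(ht) + F(-ht))/2 - F(0)) dt`, and `F(y) + F(-y) - 2F(0) = ∫₀ʸ (f(u) - f(-u)) du` is at
most `l₀ y²` in absolute value because `f` is `l₀`-Lipschitz.
-/

open MeasureTheory

section Fubini

variable {α β : Type*} [MeasurableSpace α] [MeasurableSpace β] {μ : Measure α} {ν : Measure β}
  {f : α → ℝ} {g : β → ℝ} {s : Set (α × β)}

lemma integral_indicator_mul_prod_left (hs : MeasurableSet s) (x : α) :
    ∫ y, s.indicator (fun z => f z.1 * g z.2) (x, y) ∂ν =
      (∫ y in Prod.mk x ⁻¹' s, g y ∂ν) * f x := by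
  rw [← integral_mul_const, ← integral_indicator (measurable_prodMk_left hs)]
  congr 1 with y
  by_cases hy : (x, y) ∈ s <;> simp [hy, mul_comm]

lemma integral_indicator_mul_prod_right (hs : MeasurableSet s) (y : β) :
    ∫ x, s.indicator (fun z => f z.1 * g z.2) (x, y) ∂μ = g y * ∫ x in (·, y) ⁻¹' s, f x ∂μ := by
  rw [← integral_const_mul, ← integral_indicator (measurable_prodMk_right hs)]
  congr 1 with x
  by_cases hx : (x, y) ∈ s <;> simp [hx, mul_comm]

variable [SFinite μ] [SFinite ν]

lemma integrable_mul_setIntegral_preimage (hf : Integrable f μ) (hg : Integrable g ν)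
    (hs : MeasurableSet s) : Integrable (fun y => g y * ∫ x in (·, y) ⁻¹' s, f x ∂μ) ν := by
  simpa only [integral_indicator_mul_prod_right hs] using
    ((hf.mul_prod hg).indicator hs).integral_prod_right

lemma integral_setIntegral_preimage_mul (hf : Integrable f μ) (hg : Integrable g ν)
    (hs : MeasurableSet s) :
    ∫ x, (∫ y in Prod.mk x ⁻¹' s, g y ∂ν) * f x ∂μ =
      ∫ y, g y * ∫ x in (·, y) ⁻¹' s, f x ∂μ ∂ν := by
  simpa only [integral_indicator_mul_prod_left hs, integral_indicator_mul_prod_right hs] using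
    integral_integral_swap (f := fun x y => s.indicator (fun z => f z.1 * g z.2) (x, y))
      ((hf.mul_prod hg).indicator hs)

end Fubini

section SmoothedCDF

variable {f K : ℝ → ℝ} {h : ℝ}

lemma measurableSet_le_neg_div (h : ℝ) : MeasurableSet {p : ℝ × ℝ | p.2 ≤ -(p.1 / h)} :=
  measurableSet_le measurable_snd (measurable_fst.div_const h).neg

lemma preimage_le_neg_div (hh : 0 < h) (t : ℝ) :
    (·, t) ⁻¹' {p : ℝ × ℝ | p.2 ≤ -(p.1 / h)} = Set.Iic (-(h * t)) := by
  ext x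
  simp only [Set.mem_preimage, Set.mem_ofPred_eq, Set.mem_Iic, le_neg, div_le_iff₀ hh]
  constructor <;> intro hx <;> linarith

lemma integrable_mul_integral_Iic_neg_mul (hh : 0 < h) (hf : Integrable f) (hK : Integrable K) :
    Integrable fun t => K t * ∫ x in Set.Iic (-(h * t)), f x := by
  simpa only [preimage_le_neg_div hh] using
    integrable_mul_setIntegral_preimage hf hK (measurableSet_le_neg_div h)

lemma integral_integral_Iic_neg_div_mul (hh : 0 < h) (hf : Integrable f) (hK : Integrable K) :
    ∫ x, (∫ t in Set.Iic (-(x / h)), K t) * f x =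
      ∫ t, K t * ∫ x in Set.Iic (-(h * t)), f x := by
  have := integral_setIntegral_preimage_mul hf hK (measurableSet_le_neg_div h)
  simp only [preimage_le_neg_div hh] at this
  exact this

end SmoothedCDF

lemma integral_Iic_add_integral_Iic_neg_sub {f : ℝ → ℝ} (hf : Integrable f) (y : ℝ) :
    (∫ x in Set.Iic y, f x) + (∫ x in Set.Iic (-y), f x) - 2 * ∫ x in Set.Iic 0, f x =
      ∫ u in (0)..y, (f u - f (-u)) := by
  rw [intervalIntegral.integral_sub hf.intervalIntegrable hf.comp_neg.intervalIntegrable,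
    intervalIntegral.integral_comp_neg f, neg_zero,
    ← intervalIntegral.integral_Iic_sub_Iic hf.integrableOn hf.integrableOn,
    ← intervalIntegral.integral_Iic_sub_Iic hf.integrableOn hf.integrableOn]
  ring

lemma abs_integral_Iic_add_integral_Iic_neg_sub_le {f : ℝ → ℝ} {l₀ : ℝ} (hf : Integrable f)
    (hLip : ∀ u v, |f u - f v| ≤ l₀ * |u - v|) (y : ℝ) :
    |(∫ x in Set.Iic y, f x) + (∫ x in Set.Iic (-y), f x) - 2 * ∫ x in Set.Iic 0, f x| ≤
      l₀ * y ^ 2 := by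
  wlog hy : 0 ≤ y generalizing y
  · simpa [add_comm] using this (-y) (by linarith)
  rw [integral_Iic_add_integral_Iic_neg_sub hf]
  calc ‖∫ u in (0)..y, (f u - f (-u))‖ ≤ ∫ u in (0)..y, l₀ * (2 * u) := by
        refine intervalIntegral.norm_integral_le_of_norm_le hy (ae_of_all _ fun u hu => ?_)
          (Continuous.intervalIntegrable (by fun_prop) _ _)
        have := hLip u (-u)
        rwa [sub_neg_eq_add, ← two_mul, abs_of_pos (by linarith [hu.1] : 0 < 2 * u)] at this
    _ = l₀ * y ^ 2 := by
        rw [intervalIntegral.integral_const_mul, intervalIntegral.integral_const_mul, integral_id]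
        ring

lemma integral_mul_comp_neg_of_even {G : Type*} [AddGroup G] [MeasurableSpace G]
    [MeasurableNeg G] {μ : Measure G} [μ.IsNegInvariant] {K g : G → ℝ} (hK : K.Even) :
    ∫ t, K t * g (-t) ∂μ = ∫ t, K t * g t ∂μ := by
  simpa only [hK _, neg_neg] using (integral_neg_eq_self (fun t => K t * g (-t)) μ).symm

lemma norm_integral_mul_le_of_abs_le_mul_sq {K D : ℝ → ℝ} {c : ℝ} (hK : ∀ t, 0 ≤ K t)
    (hκ : Integrable fun t => t ^ 2 * K t) (hD : ∀ t, |D t| ≤ c * t ^ 2) :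
    ‖∫ t, K t * D t‖ ≤ c * ∫ t, t ^ 2 * K t := by
  rw [← integral_const_mul]
  refine norm_integral_le_of_norm_le (hκ.const_mul c) (ae_of_all _ fun t => ?_)
  rw [norm_mul, Real.norm_of_nonneg (hK t), Real.norm_eq_abs]
  calc K t * |D t| ≤ K t * (c * t ^ 2) := mul_le_mul_of_nonneg_left (hD t) (hK t)
    _ = c * (t ^ 2 * K t) := by ring

theorem smoothing_bias_of_integrated_kernel_general (τ l₀ h : ℝ)
    (hh : 0 < h)
    (f : ℝ → ℝ)
    (hf1 : ∫ x : ℝ, f x = 1)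
    (hLip : ∀ u v : ℝ, |f u - f v| ≤ l₀ * |u - v|)
    (hF0 : ∫ x in Set.Iic (0:ℝ), f x = τ)
    (K : ℝ → ℝ) (hKnn : ∀ v, 0 ≤ K v)
    (hKsymm : ∀ v, K (-v) = K v) (hK1 : ∫ v : ℝ, K v = 1)
    (hκ : Integrable (fun v : ℝ => v^2 * K v)) :
    |(∫ x : ℝ, (∫ t in Set.Iic (-(x/h)), K t) * f x) - τ| ≤
      l₀/2 * (∫ v : ℝ, v^2 * K v) * h^2 := by
  have hfi : Integrable f := .of_integral_ne_zero (by simp [hf1])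
  have hKi : Integrable K := .of_integral_ne_zero (by simp [hK1])
  set F : ℝ → ℝ := fun y => ∫ x in Set.Iic y, f x
  have hF0' : F 0 = τ := hF0
  have hneg : Integrable fun t => K t * F (-(h * t)) :=
    integrable_mul_integral_Iic_neg_mul hh hfi hKi
  have hpos : Integrable fun t => K t * F (h * t) := by
    simpa only [hKsymm, mul_neg, neg_neg] using hneg.comp_neg
  have hrefl : ∫ t, K t * F (-(h * t)) = ∫ t, K t * F (h * t) := by
    simpa only [mul_neg] using integral_mul_comp_neg_of_even (μ := volume)
      (g := fun t => F (h * t)) hKsymm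
  have hdouble : 2 * ((∫ x, (∫ t in Set.Iic (-(x/h)), K t) * f x) - τ) =
      ∫ t, K t * (F (h * t) + F (-(h * t)) - 2 * F 0) := by
    simp only [mul_sub, mul_add]
    rw [integral_sub (by exact hpos.add hneg) (hKi.mul_const _), integral_add hpos hneg,
      integral_mul_const, hK1, integral_integral_Iic_neg_div_mul hh hfi hKi, hrefl, hF0']
    ring
  have hbias := norm_integral_mul_le_of_abs_le_mul_sq (c := l₀ * h ^ 2) hKnn hκ fun t => by
    simpa only [mul_pow, mul_assoc] using
      abs_integral_Iic_add_integral_Iic_neg_sub_le hfi hLip (h * t)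
  rw [← hdouble, Real.norm_eq_abs, abs_mul, abs_two] at hbias
  linarith

theorem smoothing_bias_of_integrated_kernel (τ l₀ h : ℝ)
    (hτ : τ ∈ Set.Ioo (0:ℝ) 1) (hl₀ : 0 < l₀) (hh : 0 < h)
    (f : ℝ → ℝ) (hfnn : ∀ x, 0 ≤ f x) (hfm : Measurable f)
    (hf1 : ∫ x : ℝ, f x = 1)
    (hLip : ∀ u v : ℝ, |f u - f v| ≤ l₀ * |u - v|)
    (hF0 : ∫ x in Set.Iic (0:ℝ), f x = τ)
    (K : ℝ → ℝ) (hKm : Measurable K) (hKnn : ∀ v, 0 ≤ K v)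
    (hKsymm : ∀ v, K (-v) = K v) (hK1 : ∫ v : ℝ, K v = 1)
    (hκ : Integrable (fun v : ℝ => v^2 * K v)) :
    |(∫ x : ℝ, (∫ t in Set.Iic (-(x/h)), K t) * f x) - τ| ≤
      l₀/2 * (∫ v : ℝ, v^2 * K v) * h^2 :=
  smoothing_bias_of_integrated_kernel_general τ l₀ h hh f hf1 hLip hF0 K hKnn hKsymm hK1 hκ
end
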